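/- arXiv:0909.3877 — 3 statements merged into one kernel-verified Lean document; each statement's English description precedes it below -/
import Mathlib

section
/- The graph G₂ has diameter at most 3. -/
/-- The vertex set of the construction `G₂` built from a graph `G₁` on vertex set `V`:
`u w` for `w ∈ U₁ ∪ U₂` (`Sum.inl` = copy in `U₁`, `Sum.inr` = copy in `U₂`),
`y p` for each unordered pair `p` of distinct vertices of `U₁ ∪ U₂`,
plus the two special vertices `z` and `x`. -/
inductive V2 (V : Type u) : Type u where
  | u : V ⊕ V → V2 V
  | y : {p : Sym2 (V ⊕ V) // ¬ p.IsDiag} → V2 V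
  | z : V2 V
  | x : V2 V

/-- The `Y`-vertex `y(a,b)` corresponding to an unordered pair `{a, b}` of distinct
vertices of `U₁ ∪ U₂`. -/
def yv {V : Type u} (a b : V ⊕ V) (h : a ≠ b) : V2 V :=
  V2.y ⟨s(a, b), by simpa using h⟩

/-- The base (pre-symmetrization) edge relation of `G₂`: copies of the edges of `G₁`
inside `U₁` and inside `U₂`, the twin edges, `Y` a clique, each `y(a,b)` joined to
`a` and `b`, `z` joined to all of `Y`, and the edge `zx`. -/
def baseRel {V : Type u} (G : SimpleGraph V) : V2 V → V2 V → Prop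
  | .u (Sum.inl a), .u (Sum.inl b) => G.Adj a b
  | .u (Sum.inr a), .u (Sum.inr b) => G.Adj a b
  | .u (Sum.inl a), .u (Sum.inr b) => a = b
  | .u w, .y p => w ∈ p.1
  | .y _, .y _ => True
  | .z, .y _ => True
  | .z, .x => True
  | _, _ => False

/-- The graph `G₂` built from `G₁ = G`. -/
def G₂ {V : Type u} (G : SimpleGraph V) : SimpleGraph (V2 V) :=
  SimpleGraph.fromRel (baseRel G)

/-- A graph has diameter at most `D` if every pair of distinct vertices is
joined by a path (walk) with at most `D` edges. -/
def hasDiamLE {α : Type u} (H : SimpleGraph α) (D : ℕ) : Prop :=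
  ∀ a b : α, a ≠ b → ∃ w : H.Walk a b, w.length ≤ D

/-- `D` is a dominating set of `G`: every vertex not in `D` is adjacent to a vertex of `D`. -/
def IsDomSet {V : Type u} (G : SimpleGraph V) (D : Set V) : Prop :=
  ∀ v ∉ D, ∃ s ∈ D, G.Adj s v

/-- The graph obtained from `H` by adding the set `S` of unordered pairs as edges. -/
def augGraph {α : Type u} (H : SimpleGraph α) (S : Set (Sym2 α)) : SimpleGraph α :=
  SimpleGraph.fromEdgeSet (H.edgeSet ∪ S)

/-- `S` is a diameter-2 augmenting set for `G₂`: a set of unordered pairs of distinct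
vertices that are not edges of `G₂`, whose addition gives a graph of diameter at most 2. -/
def IsAugSet {V : Type u} (G : SimpleGraph V) (S : Set (Sym2 (V2 V))) : Prop :=
  (∀ e ∈ S, ¬ e.IsDiag ∧ e ∉ (G₂ G).edgeSet) ∧ hasDiamLE (augGraph (G₂ G) S) 2

/-!
The vertex `z` together with `Y` is a clique, and it dominates `G₂`: `x` is adjacent to `z`,
and every `w ∈ U₁ ∪ U₂` is adjacent to `y(w, w')` where `w'` is its twin. Any two vertices
then reach this clique in one step each and are joined inside it by at most one edge.
-/

open SimpleGraph

section DominatingClique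

variable {α : Type*} {H : SimpleGraph α} {K : Set α}

lemma IsDomSet.exists_walk_to_mem (hD : IsDomSet H K) (v : α) :
    ∃ k ∈ K, ∃ p : H.Walk v k, p.length ≤ 1 := by
  by_cases hv : v ∈ K
  · exact ⟨v, hv, .nil, by simp⟩
  · obtain ⟨k, hk, hadj⟩ := hD v hv
    exact ⟨k, hk, hadj.symm.toWalk, by simp⟩

lemma SimpleGraph.IsClique.exists_walk_length_le_one (hK : H.IsClique K) {a b : α}
    (ha : a ∈ K) (hb : b ∈ K) : ∃ p : H.Walk a b, p.length ≤ 1 := by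
  rcases eq_or_ne a b with rfl | hab
  · exact ⟨.nil, by simp⟩
  · exact ⟨(hK ha hb hab).toWalk, by simp⟩

theorem hasDiamLE_three_of_isClique_of_isDomSet (hK : H.IsClique K) (hD : IsDomSet H K) :
    hasDiamLE H 3 := by
  intro a b _
  obtain ⟨ka, hka, pa, hpa⟩ := hD.exists_walk_to_mem a
  obtain ⟨kb, hkb, pb, hpb⟩ := hD.exists_walk_to_mem b
  obtain ⟨pk, hpk⟩ := hK.exists_walk_length_le_one hka hkb
  refine ⟨pa.append (pk.append pb.reverse), ?_⟩
  simp only [Walk.length_append, Walk.length_reverse]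
  omega

end DominatingClique

section G₂

variable {V : Type*} (G : SimpleGraph V)

lemma G₂_adj_u_y (w : V ⊕ V) (p : {p : Sym2 (V ⊕ V) // ¬ p.IsDiag}) (hw : w ∈ p.1) :
    (G₂ G).Adj (.u w) (.y p) := by
  refine ⟨by simp, Or.inl ?_⟩
  cases w <;> exact hw

lemma G₂_adj_y_y {p q : {p : Sym2 (V ⊕ V) // ¬ p.IsDiag}} (h : p ≠ q) :
    (G₂ G).Adj (.y p) (.y q) :=
  ⟨by simpa using h, Or.inl trivial⟩

lemma G₂_adj_z_y (p : {p : Sym2 (V ⊕ V) // ¬ p.IsDiag}) : (G₂ G).Adj .z (.y p) :=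
  ⟨by simp, Or.inl trivial⟩

lemma G₂_adj_z_x : (G₂ G).Adj .z .x :=
  ⟨by simp, Or.inl trivial⟩

lemma G₂_isClique_insert_z_range_y : (G₂ G).IsClique (insert .z (Set.range .y)) := by
  rw [isClique_insert]
  refine ⟨?_, fun _ ⟨p, hp⟩ _ ↦ hp ▸ G₂_adj_z_y G p⟩
  rintro _ ⟨p, rfl⟩ _ ⟨q, rfl⟩ hpq
  exact G₂_adj_y_y G (by simpa using hpq)

lemma G₂_isDomSet_insert_z_range_y : IsDomSet (G₂ G) (insert .z (Set.range .y)) := by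
  rintro (w | p | _ | _) hv
  · have hswap : ¬ (s(w, w.swap)).IsDiag := by cases w <;> simp
    exact ⟨.y ⟨_, hswap⟩, by simp, (G₂_adj_u_y G w _ (Sym2.mem_mk_left _ _)).symm⟩
  · exact absurd (Set.mem_insert_of_mem _ (Set.mem_range_self p)) hv
  · exact absurd (Set.mem_insert _ _) hv
  · exact ⟨.z, Set.mem_insert _ _, G₂_adj_z_x G⟩

end G₂

theorem stmt0_general {V : Type u} (G : SimpleGraph V) :
    hasDiamLE (G₂ G) 3 :=
  hasDiamLE_three_of_isClique_of_isDomSet (G₂_isClique_insert_z_range_y G)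
    (G₂_isDomSet_insert_z_range_y G)

theorem stmt0 {V : Type u} [Fintype V] [Nontrivial V] (G : SimpleGraph V)
    (hConn : G.Connected) :
    hasDiamLE (G₂ G) 3 :=
  stmt0_general G
end

section
/- If S is a proper diameter-2 augmenting set for G₂, then the set {v ∈ V₁ : {x, v¹} ∈ S} is a dominating set of G₁ of size at most |S|. -/
/-!
Let `D = {v | {x, v¹} ∈ S}`. Every pair of `S` has `x` as an end, so adding `S` creates no
edges among the vertices other than `x`, and the neighbours of `x` in `G₂ + S` are `z` and
the `w¹` with `w ∈ D`. For `v ∉ D`, a path of length at most 2 from `x` to `v¹` must then be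
`x – w¹ – v¹` with `w ∈ D` and `wv ∈ E(G₁)`, since `z` and `v¹` are not adjacent.
As `v ↦ {x, v¹}` is injective with image `S`, moreover `|D| = |S|`.
-/

namespace SimpleGraph

lemma Walk.adj_or_exists_adj_adj_of_length_le_two {α : Type*} {H : SimpleGraph α} {a b : α}
    (hab : a ≠ b) (p : H.Walk a b) (hp : p.length ≤ 2) :
    H.Adj a b ∨ ∃ c, H.Adj a c ∧ H.Adj c b := by
  match p, hp with
  | .nil, _ => exact absurd rfl hab
  | .cons h .nil, _ => exact .inl h
  | .cons h (.cons h' .nil), _ => exact .inr ⟨_, h, h'⟩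

end SimpleGraph

lemma augGraph_adj_iff_of_notMem {α : Type*} {H : SimpleGraph α} {S : Set (Sym2 α)} {a b : α}
    (hab : s(a, b) ∉ S) : (augGraph H S).Adj a b ↔ H.Adj a b := by
  simp [augGraph, hab, ← SimpleGraph.mem_edgeSet]

section G₂

variable {V : Type*} {G : SimpleGraph V}

lemma G₂_adj_x_iff {t : V2 V} : (G₂ G).Adj .x t ↔ t = .z := by
  rcases t with (a | a) | p | _ | _ <;> simp [G₂, baseRel]

lemma G₂_not_adj_z_u (w : V ⊕ V) : ¬ (G₂ G).Adj .z (.u w) := by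
  rcases w with a | a <;> simp [G₂, baseRel]

lemma G₂_adj_inl_inl_iff {w v : V} : (G₂ G).Adj (.u (.inl w)) (.u (.inl v)) ↔ G.Adj w v := by
  simp only [G₂, SimpleGraph.fromRel_adj, baseRel, ne_eq, V2.u.injEq, Sum.inl.injEq]
  exact ⟨fun ⟨_, h⟩ => h.elim id (·.symm), fun h => ⟨h.ne, .inl h⟩⟩

end G₂

def xPair {V : Type*} (v : V) : Sym2 (V2 V) := s(.x, .u (.inl v))

lemma xPair_injective {V : Type*} : Function.Injective (xPair (V := V)) := by
  intro a b h
  simpa [xPair] using h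

section Proper

variable {V : Type*} {G : SimpleGraph V} {S : Set (Sym2 (V2 V))}
  (hproper : ∀ e ∈ S, ∃ v : V, e = xPair v)
include hproper

lemma augGraph_adj_iff_of_ne_x {a b : V2 V} (ha : a ≠ .x) (hb : b ≠ .x) :
    (augGraph (G₂ G) S).Adj a b ↔ (G₂ G).Adj a b := by
  refine augGraph_adj_iff_of_notMem fun hmem => ?_
  obtain ⟨v, hv⟩ := hproper _ hmem
  have : V2.x ∈ s(a, b) := hv ▸ Sym2.mem_mk_left _ _
  rcases Sym2.mem_iff.mp this with h | h
  exacts [ha h.symm, hb h.symm]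

lemma eq_z_or_of_augGraph_adj_x {t : V2 V} (h : (augGraph (G₂ G) S).Adj .x t) :
    t = .z ∨ ∃ w, xPair w ∈ S ∧ t = .u (.inl w) := by
  by_cases hmem : s(V2.x, t) ∈ S
  · obtain ⟨w, hw⟩ := hproper _ hmem
    have ht : t = .u (.inl w) := by simpa [xPair] using hw
    subst ht
    exact .inr ⟨w, hmem, rfl⟩
  · exact .inl (G₂_adj_x_iff.mp ((augGraph_adj_iff_of_notMem hmem).mp h))

lemma isDomSet_preimage_xPair (hS : hasDiamLE (augGraph (G₂ G) S) 2) :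
    IsDomSet G (xPair ⁻¹' S) := by
  intro v hv
  have hv' : V2.u (.inl v) ≠ V2.x := by simp
  obtain ⟨p, hp⟩ := hS .x (.u (.inl v)) hv'.symm
  rcases p.adj_or_exists_adj_adj_of_length_le_two hv'.symm hp with h | ⟨c, hxc, hcv⟩
  · obtain h | ⟨w, hw, hwv⟩ := eq_z_or_of_augGraph_adj_x hproper h
    · cases h
    · cases hwv
      exact absurd hw hv
  · have hcv' := (augGraph_adj_iff_of_ne_x hproper hxc.ne' hv').mp hcv
    obtain rfl | ⟨w, hw, rfl⟩ := eq_z_or_of_augGraph_adj_x hproper hxc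
    · exact absurd hcv' (G₂_not_adj_z_u _)
    · exact ⟨w, hw, G₂_adj_inl_inl_iff.mp hcv'⟩

lemma ncard_preimage_xPair : (xPair ⁻¹' S).ncard = S.ncard :=
  Set.ncard_preimage_of_injective_subset_range xPair_injective
    fun e he => (hproper e he).imp fun _ h => h.symm

end Proper

theorem stmt3_general {V : Type u} (G : SimpleGraph V)
    (S : Set (Sym2 (V2 V))) (hS : IsAugSet G S)
    (hproper : ∀ e ∈ S, ∃ v : V, e = s(V2.x, V2.u (Sum.inl v))) :
    IsDomSet G {v : V | s(V2.x, V2.u (Sum.inl v)) ∈ S} ∧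
      {v : V | s(V2.x, V2.u (Sum.inl v)) ∈ S}.ncard ≤ S.ncard :=
  ⟨isDomSet_preimage_xPair hproper hS.2, (ncard_preimage_xPair hproper).le⟩

theorem stmt3 {V : Type u} [Fintype V] [Nontrivial V] (G : SimpleGraph V)
    (hConn : G.Connected) (S : Set (Sym2 (V2 V))) (hS : IsAugSet G S)
    (hproper : ∀ e ∈ S, ∃ v : V, e = s(V2.x, V2.u (Sum.inl v))) :
    IsDomSet G {v : V | s(V2.x, V2.u (Sum.inl v)) ∈ S} ∧
      {v : V | s(V2.x, V2.u (Sum.inl v)) ∈ S}.ncard ≤ S.ncard :=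
  stmt3_general G S hS hproper
end

section
/- If G₂ has a diameter-2 augmenting set of size at most k, then G₁ has a dominating set of size at most k. -/
/-! Say that an added edge `e` serves the copies `c` with `u c ∈ e`, the copies `a, b` if
`e = {x, y(a, b)}`, and also the twin of `c'` if `e = {x, u c'}`; each edge serves at most two
copies. Let `D` be the set of vertices of `G₁` both of whose copies are served, so that
`2 |D| ≤ 2 |S|`. A vertex `v ∉ D` has an unserved copy `c`. As `x` is adjacent in `G₂` only to
`z`, which sees no copy, the only remaining path of length at most 2 from `x` to `u c` is an added
edge `{x, u c'}` followed by a `G₂`-edge from `u c'` to `u c`. Both copies of the vertex of `c'`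
are then served, so that vertex lies in `D`, and it is `v` or a neighbour of `v` in `G₁`. -/

theorem SimpleGraph.Walk.adj_or_exists_adj_adj_of_length_le_two_s5 {α : Type*} {H : SimpleGraph α}
    {a b : α} (hne : a ≠ b) (w : H.Walk a b) (hw : w.length ≤ 2) :
    H.Adj a b ∨ ∃ m, H.Adj a m ∧ H.Adj m b := by
  match w with
  | .nil => exact absurd rfl hne
  | .cons h .nil => exact .inl h
  | .cons h (.cons h' .nil) => exact .inr ⟨_, h, h'⟩
  | .cons _ (.cons _ (.cons _ _)) => simp at hw

theorem Sym2.ncard_preimage_setOf_mem_le_two {α β : Type*} {f : β → α} (hf : f.Injective)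
    (z : Sym2 α) : (f ⁻¹' {a | a ∈ z}).ncard ≤ 2 := by
  classical
  calc (f ⁻¹' {a | a ∈ z}).ncard ≤ (z.toFinset : Set α).ncard :=
        Set.ncard_le_ncard_of_injOn f (fun _ h => by simpa using h) hf.injOn z.toFinset.finite_toSet
    _ ≤ 2 := by
      rw [Set.ncard_coe_finset, Sym2.card_toFinset]
      split_ifs <;> omega

theorem Set.two_mul_ncard_preimage_inl_inter_preimage_inr_le {α : Type*} {T : Set (α ⊕ α)}
    (hT : T.Finite) : 2 * (Sum.inl ⁻¹' T ∩ Sum.inr ⁻¹' T).ncard ≤ T.ncard := by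
  set D := Sum.inl ⁻¹' T ∩ Sum.inr ⁻¹' T
  have hsub : Set.sumEquiv.symm (D, D) ≤ T := by
    rw [OrderIso.symm_apply_le]
    exact ⟨Set.inter_subset_left, Set.inter_subset_right⟩
  calc 2 * D.ncard = (Set.sumEquiv.symm (D, D)).ncard := by
        rw [Set.ncard_sumEquiv_symm_apply]; ring
    _ ≤ T.ncard := Set.ncard_le_ncard hsub hT

theorem Set.Finite.ncard_biUnion_le_mul {ι α : Type*} {s : Set ι} (hs : s.Finite) {f : ι → Set α}
    {n : ℕ} (hf : ∀ i ∈ s, (f i).ncard ≤ n) : (⋃ i ∈ s, f i).ncard ≤ n * s.ncard := by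
  calc (⋃ i ∈ s, f i).ncard = (⋃ i ∈ hs.toFinset, f i).ncard := by simp
    _ ≤ ∑ i ∈ hs.toFinset, (f i).ncard := hs.toFinset.set_ncard_biUnion_le f
    _ ≤ hs.toFinset.card • n := Finset.sum_le_card_nsmul _ _ _ (by simpa using hf)
    _ = n * s.ncard := by rw [smul_eq_mul, mul_comm, Set.ncard_eq_toFinset_card s hs]

theorem augGraph_adj {α : Type*} {H : SimpleGraph α} {S : Set (Sym2 α)} {a b : α} :
    (augGraph H S).Adj a b ↔ (H.Adj a b ∨ s(a, b) ∈ S) ∧ a ≠ b := by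
  simp only [augGraph, SimpleGraph.fromEdgeSet_adj, Set.mem_union, SimpleGraph.mem_edgeSet]

namespace V2

variable {V : Type u} {G : SimpleGraph V} {S : Set (Sym2 (V2 V))}

instance [Finite V] : Finite (V2 V) :=
  Finite.of_injective
    (fun m : V2 V => match m with
      | .u c => (some (some (Sum.inl c)) : Option (Option ((V ⊕ V) ⊕ Sym2 (V ⊕ V))))
      | .y p => some (some (Sum.inr p.1))
      | .z => some none
      | .x => none)
    (by rintro (_ | _ | _ | _) (_ | _ | _ | _) h <;> simp_all [Subtype.ext_iff])

theorem G₂_adj_x_iff {m : V2 V} : (G₂ G).Adj x m ↔ m = z := by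
  constructor
  · rintro ⟨-, h | h⟩ <;> cases m <;> simp_all [baseRel]
  · rintro rfl
    exact ⟨by simp, .inr trivial⟩

theorem G₂_not_adj_z_u {c : V ⊕ V} : ¬ (G₂ G).Adj z (u c) := by
  rintro ⟨-, h | h⟩ <;> cases c <;> simp [baseRel] at h

theorem mem_of_G₂_adj_y_u {p} {c : V ⊕ V} (h : (G₂ G).Adj (y p) (u c)) : c ∈ p.1 := by
  obtain ⟨-, h | h⟩ := h <;> simp_all [baseRel]

theorem G₂_adj_u_u {c c' : V ⊕ V} (h : (G₂ G).Adj (u c') (u c)) :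
    c'.elim id id = c.elim id id ∨ G.Adj (c'.elim id id) (c.elim id id) := by
  obtain ⟨-, h | h⟩ := h <;> cases c <;> cases c' <;> simp_all [baseRel, G.adj_comm]

def servedCopies (e : Sym2 (V2 V)) : Set (V ⊕ V) :=
  {c | u c ∈ e ∨ x ∈ e ∧ (u c.swap ∈ e ∨ ∃ p, y p ∈ e ∧ c ∈ p.1)}

theorem ncard_servedCopies_le_two (e : Sym2 (V2 V)) : (servedCopies e).ncard ≤ 2 := by
  by_cases hx : x ∈ e
  · obtain ⟨m, rfl⟩ := Sym2.mem_iff_exists.mp hx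
    cases m with
    | u c' =>
      have : servedCopies s(x, u c') = {c', c'.swap} := by
        ext c; rcases c with c | c <;> rcases c' with c' | c' <;> simp [servedCopies]
      rw [this]
      exact (Set.ncard_insert_le _ _).trans (by simp)
    | y p =>
      have : servedCopies s(x, y p) = {c | c ∈ p.1} := by ext c; simp [servedCopies]
      exact this ▸ p.1.ncard_preimage_setOf_mem_le_two Function.injective_id
    | z | x => simp [servedCopies]
  · have : servedCopies e = u ⁻¹' {m | m ∈ e} := by ext c; simp [servedCopies, hx]
    exact this ▸ e.ncard_preimage_setOf_mem_le_two fun _ _ h => by cases h; rfl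

def bothTwinsServed (S : Set (Sym2 (V2 V))) : Set V :=
  Sum.inl ⁻¹' (⋃ e ∈ S, servedCopies e) ∩ Sum.inr ⁻¹' (⋃ e ∈ S, servedCopies e)

theorem ncard_bothTwinsServed_le [Finite V] : (bothTwinsServed S).ncard ≤ S.ncard := by
  have hserved : (⋃ e ∈ S, servedCopies e).ncard ≤ 2 * S.ncard :=
    S.toFinite.ncard_biUnion_le_mul fun e _ => ncard_servedCopies_le_two e
  have := Set.two_mul_ncard_preimage_inl_inter_preimage_inr_le (⋃ e ∈ S, servedCopies e).toFinite
  rw [bothTwinsServed]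
  omega

theorem exists_x_edge_adj_of_forall_not_mem_servedCopies (hA : IsAugSet G S) {c : V ⊕ V}
    (hc : ∀ e ∈ S, c ∉ servedCopies e) : ∃ c', s(x, u c') ∈ S ∧ (G₂ G).Adj (u c') (u c) := by
  have hne : (x : V2 V) ≠ u c := nofun
  have not_mem : ∀ m, s(m, u c) ∉ S := fun m hm => hc _ hm (.inl (by simp))
  obtain ⟨w, hw⟩ := hA.2 x (u c) hne
  rcases w.adj_or_exists_adj_adj_of_length_le_two_s5 hne hw with hxc | ⟨m, hxm, hmc⟩
  · rcases (augGraph_adj.mp hxc).1 with h | h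
    · exact absurd (G₂_adj_x_iff.mp h) nofun
    · exact absurd h (not_mem x)
  obtain ⟨hxm | hxm, hxm_ne⟩ := augGraph_adj.mp hxm <;>
    obtain ⟨hmc | hmc, -⟩ := augGraph_adj.mp hmc
  · exact absurd (G₂_adj_x_iff.mp hxm ▸ hmc) G₂_not_adj_z_u
  · exact absurd hmc (not_mem m)
  · cases m with
    | u c' => exact ⟨c', hxm, hmc⟩
    | y p => exact absurd hxm (hc _ · (.inr ⟨by simp, .inr ⟨p, by simp, mem_of_G₂_adj_y_u hmc⟩⟩))
    | z => exact absurd hmc G₂_not_adj_z_u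
    | x => exact absurd rfl hxm_ne
  · exact absurd hmc (not_mem m)

theorem isDomSet_bothTwinsServed (hA : IsAugSet G S) : IsDomSet G (bothTwinsServed S) := by
  intro v hv
  obtain ⟨c, rfl, hc⟩ : ∃ c : V ⊕ V, c.elim id id = v ∧ ∀ e ∈ S, c ∉ servedCopies e := by
    simp only [bothTwinsServed, Set.mem_inter_iff, Set.mem_preimage, Set.mem_iUnion, not_and_or,
      not_exists] at hv
    rcases hv with h | h
    exacts [⟨.inl v, rfl, h⟩, ⟨.inr v, rfl, h⟩]
  obtain ⟨c', hS, hadj⟩ := exists_x_edge_adj_of_forall_not_mem_servedCopies hA hc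
  have hD : c'.elim id id ∈ bothTwinsServed S := by
    cases c' <;> exact ⟨Set.mem_biUnion hS (by simp [servedCopies]),
      Set.mem_biUnion hS (by simp [servedCopies])⟩
  refine ⟨_, hD, ?_⟩
  rcases G₂_adj_u_u hadj with heq | h
  · exact absurd (heq ▸ hD) hv
  · exact h

end V2

theorem stmt5_general {V : Type u} [Fintype V] (G : SimpleGraph V)
    (k : ℕ)
    (h : ∃ S : Set (Sym2 (V2 V)), IsAugSet G S ∧ S.ncard ≤ k) :
    ∃ D : Set V, IsDomSet G D ∧ D.ncard ≤ k := by
  obtain ⟨S, hA, hk⟩ := h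
  exact ⟨V2.bothTwinsServed S, V2.isDomSet_bothTwinsServed hA,
    V2.ncard_bothTwinsServed_le.trans hk⟩

theorem stmt5 {V : Type u} [Fintype V] [Nontrivial V] (G : SimpleGraph V)
    (hConn : G.Connected) (k : ℕ)
    (h : ∃ S : Set (Sym2 (V2 V)), IsAugSet G S ∧ S.ncard ≤ k) :
    ∃ D : Set V, IsDomSet G D ∧ D.ncard ≤ k :=
  stmt5_general G k h
end
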